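/- arXiv:1902.08916 — 8 statements merged into one kernel-verified Lean document; each statement's English description precedes it below -/
import Mathlib

section
/- Let k > 0, N ≥ 2, 1 ≤ j ≤ N-1 with k² + (j/(2N))² < 1 and k² + (1 - j/(2N))² > 1, and set βₙ = k² + (n + j/(2N))². Let (φₙ)ₙ∈ℤ be a real sequence with ∑ₙ βₙ² φₙ² < ∞, not identically zero, and suppose σ, λ, R, with λ ≥ 0, R > 0, σ + λ + β₀ > 0, satisfy the recurrence 2(1+λ)βₙ(σ + λ + βₙ) φₙ = R k ((βₙ₊₁ - 1) φₙ₊₁ − (βₙ₋₁ - 1) φₙ₋₁) for all n ∈ ℤ. Then ∑ₙ∈ℤ βₙ(σ + λ + βₙ)(βₙ - 1) φₙ² = 0. -/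
/-!
Set `aₙ = (βₙ - 1) φₙ`. Multiplying the `n`-th equation of the recurrence by `aₙ` turns its
right-hand side into `R k (aₙ aₙ₊₁ - aₙ aₙ₋₁)`, whose two halves have the same sum over `ℤ`
after the index shift `n ↦ n + 1`. Both sums converge because `a ∈ ℓ²`, which follows from
`∑ βₙ² φₙ² < ∞` and `βₙ ≥ k² > 0`.
-/

theorem Summable.mul_of_summable_sq {ι : Type*} {f g : ι → ℝ}
    (hf : Summable fun i => f i ^ 2) (hg : Summable fun i => g i ^ 2) :
    Summable fun i => f i * g i :=
  (hf.add hg).of_norm_bounded fun i => by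
    rw [Real.norm_eq_abs, abs_mul]
    nlinarith [two_mul_le_add_sq |f i| |g i|, sq_abs (f i), sq_abs (g i),
      abs_nonneg (f i), abs_nonneg (g i)]

theorem summable_sq_sub_one_mul_of_le {ι : Type*} {β φ : ι → ℝ} {c : ℝ} (hc : 0 < c)
    (hβ : ∀ i, c ≤ β i) (hsum : Summable fun i => β i ^ 2 * φ i ^ 2) :
    Summable fun i => ((β i - 1) * φ i) ^ 2 := by
  refine (hsum.mul_left ((1 + 1 / c) ^ 2)).of_nonneg_of_le (fun i => sq_nonneg _) fun i => ?_
  have hone : 1 ≤ β i / c := (one_le_div hc).2 (hβ i)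
  have habs : |β i - 1| ≤ (1 + 1 / c) * β i := by
    rw [add_mul, one_mul, one_div_mul_eq_div, abs_le]
    constructor <;> linarith [hc.trans_le (hβ i)]
  calc ((β i - 1) * φ i) ^ 2 = |β i - 1| ^ 2 * φ i ^ 2 := by rw [mul_pow, sq_abs]
    _ ≤ ((1 + 1 / c) * β i) ^ 2 * φ i ^ 2 := by gcongr
    _ = (1 + 1 / c) ^ 2 * (β i ^ 2 * φ i ^ 2) := by ring

theorem tsum_mul_succ_sub_mul_pred_eq_zero {α : Type*} [CommRing α] [TopologicalSpace α]
    [IsTopologicalAddGroup α] [T2Space α] {a : ℤ → α}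
    (ha : Summable fun n => a n * a (n + 1)) :
    ∑' n, (a n * a (n + 1) - a n * a (n - 1)) = 0 := by
  have hshift : ∑' n, a n * a (n - 1) = ∑' n, a n * a (n + 1) := by
    rw [← (Equiv.addRight (1 : ℤ)).tsum_eq]
    simp only [Equiv.coe_addRight, add_sub_cancel_right, mul_comm]
  have ha' : Summable fun n => a n * a (n - 1) := by
    rw [← (Equiv.addRight (1 : ℤ)).summable_iff]
    simpa only [Function.comp_def, Equiv.coe_addRight, add_sub_cancel_right, mul_comm] using ha
  rw [ha.tsum_sub ha', hshift, sub_self]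

theorem stmt_1_general (k lam R σ : ℝ) (N j : ℤ) (hk : 0 < k)
    (β : ℤ → ℝ) (hβ : ∀ n : ℤ, β n = k ^ 2 + ((n : ℝ) + (j : ℝ) / (2 * N)) ^ 2)
    (hlam : 0 ≤ lam)
    (φ : ℤ → ℝ) (hsum : Summable (fun n : ℤ => (β n) ^ 2 * (φ n) ^ 2))
    (hrec : ∀ n : ℤ, 2 * (1 + lam) * β n * (σ + lam + β n) * φ n
      = R * k * ((β (n + 1) - 1) * φ (n + 1) - (β (n - 1) - 1) * φ (n - 1))) :
    ∑' n : ℤ, β n * (σ + lam + β n) * (β n - 1) * (φ n) ^ 2 = 0 := by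
  have hβk : ∀ n, k ^ 2 ≤ β n := fun n => by
    rw [hβ n]
    exact le_add_of_nonneg_right (sq_nonneg _)
  set a : ℤ → ℝ := fun n => (β n - 1) * φ n
  have ha : Summable fun n => a n ^ 2 := summable_sq_sub_one_mul_of_le (by positivity) hβk hsum
  have hprod : Summable fun n => a n * a (n + 1) :=
    ha.mul_of_summable_sq (ha.comp_injective (add_left_injective 1))
  have hterm : ∀ n, 2 * (1 + lam) * (β n * (σ + lam + β n) * (β n - 1) * φ n ^ 2)
      = R * k * (a n * a (n + 1) - a n * a (n - 1)) := fun n => by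
    linear_combination a n * hrec n
  have hscaled : 2 * (1 + lam) * ∑' n, β n * (σ + lam + β n) * (β n - 1) * φ n ^ 2 = 0 := by
    rw [← tsum_mul_left, tsum_congr hterm, tsum_mul_left,
      tsum_mul_succ_sub_mul_pred_eq_zero hprod, mul_zero]
  exact (mul_eq_zero.1 hscaled).resolve_left (by positivity)

theorem stmt_1 (k lam R σ : ℝ) (N j : ℤ) (hk : 0 < k) (hN : 2 ≤ N)
    (hj1 : 1 ≤ j) (hj2 : j ≤ N - 1)
    (h1 : k ^ 2 + ((j : ℝ) / (2 * N)) ^ 2 < 1)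
    (h2 : k ^ 2 + (1 - (j : ℝ) / (2 * N)) ^ 2 > 1)
    (β : ℤ → ℝ) (hβ : ∀ n : ℤ, β n = k ^ 2 + ((n : ℝ) + (j : ℝ) / (2 * N)) ^ 2)
    (hlam : 0 ≤ lam) (hR : 0 < R) (hσ : 0 < σ + lam + β 0)
    (φ : ℤ → ℝ) (hsum : Summable (fun n : ℤ => (β n) ^ 2 * (φ n) ^ 2))
    (hne : φ ≠ 0)
    (hrec : ∀ n : ℤ, 2 * (1 + lam) * β n * (σ + lam + β n) * φ n
      = R * k * ((β (n + 1) - 1) * φ (n + 1) - (β (n - 1) - 1) * φ (n - 1))) :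
    ∑' n : ℤ, β n * (σ + lam + β n) * (β n - 1) * (φ n) ^ 2 = 0 :=
  stmt_1_general k lam R σ N j hk β hβ hlam φ hsum hrec
end

section
/- Under the hypotheses of the previous identity (β₀ < 1, βₙ > 1 for n ≠ 0, σ + λ + β₀ > 0, and ∑ₙ βₙ(σ+λ+βₙ)(βₙ-1)φₙ² = 0 with φ not identically zero), one has ∑ₙ∈ℤ βₙ(βₙ - 1) φₙ² < 0. -/
/-!
Put `f n = βₙ(βₙ - 1)φₙ²` and `w n = σ + λ + βₙ`. Then `f n ≥ 0` for `n ≠ 0` and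
`w n > w 0 > 0` for `n ≠ 0`, so `w 0 · ∑ f ≤ ∑ w f = 0`, strictly unless `f` is supported at `0`;
in that case `∑ w f = w 0 · f 0 = 0` forces `f = 0`, i.e. `φ = 0`.
-/

theorem summable_of_summable_mul_of_pos_le {ι : Type*} {f w : ι → ℝ} {c : ℝ} (hc : 0 < c)
    (hw : ∀ i, c ≤ w i) (hwf : Summable fun i => w i * f i) : Summable f := by
  refine Summable.of_norm_bounded (hwf.abs.mul_left c⁻¹) fun i => ?_
  rw [Real.norm_eq_abs, abs_mul, le_inv_mul_iff₀ hc]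
  exact mul_le_mul_of_nonneg_right ((hw i).trans (le_abs_self _)) (abs_nonneg _)

theorem tsum_neg_of_tsum_mul_eq_zero {ι : Type*} {f w : ι → ℝ} {i₀ : ι} (hw₀ : 0 < w i₀)
    (hw : ∀ i ≠ i₀, w i₀ < w i) (hf : ∀ i ≠ i₀, 0 ≤ f i) (hf₀ : f ≠ 0)
    (hwf : Summable fun i => w i * f i) (hzero : ∑' i, w i * f i = 0) : ∑' i, f i < 0 := by
  have hw_ge : ∀ i, w i₀ ≤ w i := fun i => by
    rcases eq_or_ne i i₀ with rfl | hi
    exacts [le_rfl, (hw i hi).le]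
  have hle : ∀ i, w i₀ * f i ≤ w i * f i := fun i => by
    rcases eq_or_ne i i₀ with rfl | hi
    exacts [le_rfl, mul_le_mul_of_nonneg_right (hw_ge i) (hf i hi)]
  obtain ⟨i, hi, hfi⟩ : ∃ i ≠ i₀, 0 < f i := by
    by_contra! hsupp
    have hvanish : ∀ i ≠ i₀, f i = 0 := fun i hi => le_antisymm (hsupp i hi) (hf i hi)
    rw [tsum_eq_single i₀ fun i hi => by rw [hvanish i hi, mul_zero]] at hzero
    have hf_i₀ : f i₀ = 0 := (mul_eq_zero.mp hzero).resolve_left hw₀.ne'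
    exact hf₀ <| funext fun i => by
      rcases eq_or_ne i i₀ with rfl | hi
      exacts [hf_i₀, hvanish i hi]
  have hlt : w i₀ * f i < w i * f i := mul_lt_mul_of_pos_right (hw i hi) hfi
  have key := Summable.tsum_lt_tsum hle hlt
    ((summable_of_summable_mul_of_pos_le hw₀ hw_ge hwf).mul_left _) hwf
  rw [tsum_mul_left, hzero] at key
  exact neg_of_mul_neg_right key hw₀.le

theorem stmt_2_general (k lam σ : ℝ) (N j : ℤ) (hk : 0 < k)
    (β : ℤ → ℝ) (hβ : ∀ n : ℤ, β n = k ^ 2 + ((n : ℝ) + (j : ℝ) / (2 * N)) ^ 2)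
    (hβ0 : β 0 < 1) (hβn : ∀ n : ℤ, n ≠ 0 → 1 < β n)
    (hσ : 0 < σ + lam + β 0)
    (φ : ℤ → ℝ) (hne : φ ≠ 0)
    (hsum3 : Summable (fun n : ℤ => β n * (σ + lam + β n) * (β n - 1) * (φ n) ^ 2))
    (hzero : ∑' n : ℤ, β n * (σ + lam + β n) * (β n - 1) * (φ n) ^ 2 = 0) :
    ∑' n : ℤ, β n * (β n - 1) * (φ n) ^ 2 < 0 := by
  have hβ0_pos : 0 < β 0 := by rw [hβ 0]; positivity
  have hcoeff : ∀ n, β n * (β n - 1) ≠ 0 := fun n => by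
    rcases eq_or_ne n 0 with rfl | hn
    · exact (mul_neg_of_pos_of_neg hβ0_pos (sub_neg.mpr hβ0)).ne
    · have := hβn n hn
      exact (mul_pos (by linarith) (sub_pos.mpr this)).ne'
  have hregroup : (fun n => β n * (σ + lam + β n) * (β n - 1) * φ n ^ 2)
      = fun n => (σ + lam + β n) * (β n * (β n - 1) * φ n ^ 2) := by
    funext n; ring
  rw [hregroup] at hsum3 hzero
  refine tsum_neg_of_tsum_mul_eq_zero hσ (fun n hn => by linarith [hβn n hn])
    (fun n hn => ?_) (fun hf => hne (funext fun n => ?_)) hsum3 hzero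
  · have := hβn n hn
    exact mul_nonneg (mul_nonneg (by linarith) (by linarith)) (sq_nonneg _)
  · exact pow_eq_zero_iff two_ne_zero |>.mp <|
      (mul_eq_zero.mp (congrFun hf n)).resolve_left (hcoeff n)

theorem stmt_2 (k lam σ : ℝ) (N j : ℤ) (hk : 0 < k) (hN : 2 ≤ N)
    (hj1 : 1 ≤ j) (hj2 : j ≤ N - 1)
    (β : ℤ → ℝ) (hβ : ∀ n : ℤ, β n = k ^ 2 + ((n : ℝ) + (j : ℝ) / (2 * N)) ^ 2)
    (hβ0 : β 0 < 1) (hβn : ∀ n : ℤ, n ≠ 0 → 1 < β n)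
    (hlam : 0 ≤ lam) (hσ : 0 < σ + lam + β 0)
    (φ : ℤ → ℝ) (hne : φ ≠ 0)
    (hsum : Summable (fun n : ℤ => (β n) ^ 2 * (φ n) ^ 2))
    (hsum3 : Summable (fun n : ℤ => β n * (σ + lam + β n) * (β n - 1) * (φ n) ^ 2))
    (hzero : ∑' n : ℤ, β n * (σ + lam + β n) * (β n - 1) * (φ n) ^ 2 = 0) :
    ∑' n : ℤ, β n * (β n - 1) * (φ n) ^ 2 < 0 :=
  stmt_2_general k lam σ N j hk β hβ hβ0 hβn hσ φ hne hsum3 hzero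
end

section
/- Under the same hypotheses (β₀ < 1, βₙ > 1 for n ≠ 0, σ + λ + β₀ > 0, ∑ₙ βₙ(σ+λ+βₙ)(βₙ-1)φₙ² = 0, φ not identically zero), one has ∑ₙ∈ℤ (βₙ - 1) φₙ² < 0. -/
/-! With `c = β₀ (a + β₀) > 0` and `a = σ + λ`, the gap
`βₙ (a + βₙ) - c = (βₙ - β₀)(a + βₙ + β₀)` makes every term of
`∑ (βₙ (a + βₙ) - c)(βₙ - 1) φₙ²` nonnegative, and this sum equals `-c ∑ (βₙ - 1) φₙ²` by the
vanishing identity. Hence `∑ (βₙ - 1) φₙ² ≤ 0`, strictly unless `φ` is supported at `n = 0`,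
where the sum is `(β₀ - 1) φ₀² < 0`. Since `βₙ (a + βₙ) ≥ c`, the series `∑ (βₙ - 1) φₙ²` is
dominated by the weighted one and so converges. -/

section SpectralGap

variable {ι : Type*} {i₀ : ι} {β w : ι → ℝ} {a : ℝ}

lemma mul_add_self_le_of_le (hβ₀ : 0 < β i₀) (ha : 0 < a + β i₀) (hmin : β i₀ ≤ β i) :
    β i₀ * (a + β i₀) ≤ β i * (a + β i) :=
  mul_le_mul hmin (by linarith) ha.le (by linarith)

lemma summable_sub_one_mul_of_summable_weighted (hβ₀ : 0 < β i₀) (ha : 0 < a + β i₀)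
    (hmin : ∀ i, β i₀ ≤ β i)
    (hs : Summable fun i => β i * (a + β i) * (β i - 1) * w i) :
    Summable fun i => (β i - 1) * w i := by
  have hc : 0 < β i₀ * (a + β i₀) := mul_pos hβ₀ ha
  refine (hs.norm.mul_left (β i₀ * (a + β i₀))⁻¹).of_norm_bounded fun i => ?_
  have hle := mul_add_self_le_of_le hβ₀ ha (hmin i)
  rw [le_inv_mul_iff₀ hc, mul_assoc _ (β i - 1), norm_mul (β i * (a + β i)),
    Real.norm_of_nonneg (hc.trans_le hle).le]
  exact mul_le_mul_of_nonneg_right hle (norm_nonneg _)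

lemma weighted_gap_nonneg (hw : 0 ≤ w) (hβ₀1 : β i₀ < 1) (hβ : ∀ i ≠ i₀, 1 < β i)
    (ha : 0 < a + β i₀) (i : ι) :
    0 ≤ (β i - β i₀) * (a + β i + β i₀) * ((β i - 1) * w i) := by
  by_cases hi : i = i₀
  · simp [hi]
  · have := hβ i hi
    exact mul_nonneg (mul_nonneg (by linarith) (by linarith)) (mul_nonneg (by linarith) (hw i))

lemma weighted_gap_pos (hw : 0 ≤ w) (hβ₀1 : β i₀ < 1) (hβ : ∀ i ≠ i₀, 1 < β i)
    (ha : 0 < a + β i₀) {i : ι} (hi : i ≠ i₀) (hwi : w i ≠ 0) :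
    0 < (β i - β i₀) * (a + β i + β i₀) * ((β i - 1) * w i) := by
  have := hβ i hi
  exact mul_pos (mul_pos (by linarith) (by linarith))
    (mul_pos (by linarith) ((hw i).lt_of_ne' hwi))

theorem tsum_sub_one_mul_neg_of_tsum_weighted_eq_zero (hw : 0 ≤ w) (hw0 : w ≠ 0)
    (hβ₀ : 0 < β i₀) (hβ₀1 : β i₀ < 1) (hβ : ∀ i ≠ i₀, 1 < β i) (ha : 0 < a + β i₀)
    (hs : Summable fun i => β i * (a + β i) * (β i - 1) * w i)
    (hzero : ∑' i, β i * (a + β i) * (β i - 1) * w i = 0) :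
    ∑' i, (β i - 1) * w i < 0 := by
  set c := β i₀ * (a + β i₀)
  have hc : 0 < c := mul_pos hβ₀ ha
  have hmin : ∀ i, β i₀ ≤ β i := fun i => by
    by_cases hi : i = i₀
    · rw [hi]
    · linarith [hβ i hi]
  have hS := summable_sub_one_mul_of_summable_weighted hβ₀ ha hmin hs
  have hd : Summable fun i => (β i - β i₀) * (a + β i + β i₀) * ((β i - 1) * w i) := by
    refine (hs.sub (hS.mul_left c)).congr fun i => ?_
    ring
  have hgap : ∑' i, (β i - β i₀) * (a + β i + β i₀) * ((β i - 1) * w i)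
      = -(c * ∑' i, (β i - 1) * w i) := by
    rw [← tsum_mul_left, ← zero_sub, ← hzero, ← hs.tsum_sub (hS.mul_left c)]
    exact tsum_congr fun i => by ring
  by_cases hsupp : ∃ i ≠ i₀, w i ≠ 0
  · obtain ⟨i, hi, hwi⟩ := hsupp
    have := hd.tsum_pos (weighted_gap_nonneg hw hβ₀1 hβ ha) i
      (weighted_gap_pos hw hβ₀1 hβ ha hi hwi)
    nlinarith
  · push Not at hsupp
    have hw₀ : w i₀ ≠ 0 := fun h => hw0 <| funext fun i => by
      by_cases hi : i = i₀
      · rw [hi, h]; rfl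
      · exact hsupp i hi
    rw [tsum_eq_single i₀ fun i hi => by rw [hsupp i hi, mul_zero]]
    exact mul_neg_of_neg_of_pos (by linarith) ((hw i₀).lt_of_ne' hw₀)

end SpectralGap

theorem stmt_3_general (k lam σ : ℝ) (N j : ℤ) (hk : 0 < k)
    (β : ℤ → ℝ) (hβ : ∀ n : ℤ, β n = k ^ 2 + ((n : ℝ) + (j : ℝ) / (2 * N)) ^ 2)
    (hβ0 : β 0 < 1) (hβn : ∀ n : ℤ, n ≠ 0 → 1 < β n)
    (hσ : 0 < σ + lam + β 0)
    (φ : ℤ → ℝ) (hne : φ ≠ 0)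
    (hsum3 : Summable (fun n : ℤ => β n * (σ + lam + β n) * (β n - 1) * (φ n) ^ 2))
    (hzero : ∑' n : ℤ, β n * (σ + lam + β n) * (β n - 1) * (φ n) ^ 2 = 0) :
    ∑' n : ℤ, (β n - 1) * (φ n) ^ 2 < 0 := by
  have hβ0pos : 0 < β 0 := by
    rw [hβ 0]
    positivity
  have hφsq : (fun n => φ n ^ 2) ≠ 0 := fun h =>
    hne <| funext fun n => pow_eq_zero_iff two_ne_zero |>.mp (congrFun h n)
  exact tsum_sub_one_mul_neg_of_tsum_weighted_eq_zero (fun n => sq_nonneg (φ n)) hφsq hβ0pos hβ0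
    hβn hσ hsum3 hzero

theorem stmt_3 (k lam σ : ℝ) (N j : ℤ) (hk : 0 < k) (hN : 2 ≤ N)
    (hj1 : 1 ≤ j) (hj2 : j ≤ N - 1)
    (β : ℤ → ℝ) (hβ : ∀ n : ℤ, β n = k ^ 2 + ((n : ℝ) + (j : ℝ) / (2 * N)) ^ 2)
    (hβ0 : β 0 < 1) (hβn : ∀ n : ℤ, n ≠ 0 → 1 < β n)
    (hlam : 0 ≤ lam) (hσ : 0 < σ + lam + β 0)
    (φ : ℤ → ℝ) (hne : φ ≠ 0)
    (hsum : Summable (fun n : ℤ => (β n) ^ 2 * (φ n) ^ 2))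
    (hsum3 : Summable (fun n : ℤ => β n * (σ + lam + β n) * (β n - 1) * (φ n) ^ 2))
    (hzero : ∑' n : ℤ, β n * (σ + lam + β n) * (β n - 1) * (φ n) ^ 2 = 0) :
    ∑' n : ℤ, (β n - 1) * (φ n) ^ 2 < 0 :=
  stmt_3_general k lam σ N j hk β hβ hβ0 hβn hσ φ hne hsum3 hzero
end

section
/- Under the same hypotheses, the signed sum ∑ₙ∈ℤ (−1)ⁿ βₙ(βₙ - 1) φₙ² is strictly negative. -/
/-!
Write `A n = βₙ(βₙ - 1)φₙ²` and `c = σ + λ + β₀ > 0`. Since `β₀ < 1 < βₙ` for `n ≠ 0`, the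
terms `A n` with `n ≠ 0` are nonnegative and their weights `σ + λ + βₙ` exceed `c`, so termwise
`c · (-1)ⁿ A n ≤ (σ + λ + βₙ) A n`, with equality at `n = 0`. Summing gives
`c · ∑ (-1)ⁿ A n ≤ ∑ (σ + λ + βₙ) A n = 0`, and the inequality is strict because some `A n` with
`n ≠ 0` is nonzero: otherwise the vanishing weighted sum would force `A 0 = 0` as well.
-/

section WeightedSum

variable {ι : Type*} {s w f : ι → ℝ}

theorem exists_ne_apply_ne_zero_of_hasSum_mul_zero (i₀ : ι) (hw₀ : w i₀ ≠ 0)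
    (h : HasSum (fun i => w i * f i) 0) (hf : f ≠ 0) : ∃ i ≠ i₀, f i ≠ 0 := by
  by_contra! hvanish
  have hsingle : HasSum (fun i => w i * f i) (w i₀ * f i₀) :=
    hasSum_single i₀ fun i hi => by rw [hvanish i hi, mul_zero]
  have hf₀ : f i₀ = 0 := by
    simpa [hw₀] using hsingle.unique h
  refine hf (funext fun i => ?_)
  by_cases hi : i = i₀
  · exact hi ▸ hf₀
  · exact hvanish i hi

theorem tsum_mul_neg_of_hasSum_mul_zero (i₀ : ι) (hs : ∀ i, |s i| ≤ 1) (hs₀ : s i₀ = 1)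
    (hw₀ : 0 < w i₀) (hw : ∀ i ≠ i₀, w i₀ < w i) (hf : ∀ i ≠ i₀, 0 ≤ f i)
    (h : HasSum (fun i => w i * f i) 0) (hf0 : f ≠ 0) : ∑' i, s i * f i < 0 := by
  obtain ⟨m, hm, hfm⟩ := exists_ne_apply_ne_zero_of_hasSum_mul_zero i₀ hw₀.ne' h hf0
  have habs_le : ∀ i ≠ i₀, |s i * f i| ≤ f i := fun i hi => by
    rw [abs_mul, abs_of_nonneg (hf i hi)]
    exact mul_le_of_le_one_left (hf i hi) (hs i)
  have hle_weighted : ∀ i ≠ i₀, f i ≤ w i * f i / w i₀ := fun i hi => by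
    rw [le_div_iff₀ hw₀, mul_comm]
    exact mul_le_mul_of_nonneg_right (hw i hi).le (hf i hi)
  have hle : ∀ i, s i * f i ≤ w i * f i / w i₀ := fun i => by
    by_cases hi : i = i₀
    · subst hi
      rw [hs₀, one_mul, mul_div_cancel_left₀ _ hw₀.ne']
    · exact (le_abs_self _).trans ((habs_le i hi).trans (hle_weighted i hi))
  have hlt : s m * f m < w m * f m / w i₀ := by
    have hfm_pos : 0 < f m := (hf m hm).lt_of_ne' hfm
    refine (le_abs_self _).trans_lt ((habs_le m hm).trans_lt ?_)
    rw [lt_div_iff₀ hw₀, mul_comm]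
    exact mul_lt_mul_of_pos_right (hw m hm) hfm_pos
  have hsummable : Summable fun i => s i * f i :=
    (h.div_const (w i₀)).summable.of_norm_bounded_eventually <|
      (Set.finite_singleton i₀).eventually_cofinite_notMem.mono fun i hi =>
        (habs_le i hi).trans (hle_weighted i hi)
  simpa using hasSum_lt hle hlt hsummable.hasSum (h.div_const (w i₀))

end WeightedSum

theorem stmt_4_general (k lam σ : ℝ) (N j : ℤ) (hk : 0 < k)
    (β : ℤ → ℝ) (hβ : ∀ n : ℤ, β n = k ^ 2 + ((n : ℝ) + (j : ℝ) / (2 * N)) ^ 2)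
    (hβ0 : β 0 < 1) (hβn : ∀ n : ℤ, n ≠ 0 → 1 < β n)
    (hσ : 0 < σ + lam + β 0)
    (φ : ℤ → ℝ) (hne : φ ≠ 0)
    (hsum3 : Summable (fun n : ℤ => β n * (σ + lam + β n) * (β n - 1) * (φ n) ^ 2))
    (hzero : ∑' n : ℤ, β n * (σ + lam + β n) * (β n - 1) * (φ n) ^ 2 = 0) :
    ∑' n : ℤ, (-1 : ℝ) ^ n * (β n * (β n - 1) * (φ n) ^ 2) < 0 := by
  have hβ0_pos : 0 < β 0 := by rw [hβ 0]; positivity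
  have hcoeff_ne : ∀ n, β n * (β n - 1) ≠ 0 := fun n => by
    by_cases hn : n = 0
    · subst hn
      exact mul_ne_zero hβ0_pos.ne' (by linarith)
    · have := hβn n hn
      exact mul_ne_zero (by linarith) (by linarith)
  have hweighted : HasSum (fun n => (σ + lam + β n) * (β n * (β n - 1) * φ n ^ 2)) 0 := by
    convert hzero ▸ hsum3.hasSum using 2 with n
    ring
  refine tsum_mul_neg_of_hasSum_mul_zero 0 (fun n => (abs_neg_one_zpow n).le) (zpow_zero _)
    hσ (fun n hn => by linarith [hβn n hn]) (fun n hn => ?_) hweighted ?_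
  · have := hβn n hn
    positivity
  · intro hA
    refine hne (funext fun n => ?_)
    simpa [hcoeff_ne n] using congrFun hA n

theorem stmt_4 (k lam σ : ℝ) (N j : ℤ) (hk : 0 < k) (hN : 2 ≤ N)
    (hj1 : 1 ≤ j) (hj2 : j ≤ N - 1)
    (β : ℤ → ℝ) (hβ : ∀ n : ℤ, β n = k ^ 2 + ((n : ℝ) + (j : ℝ) / (2 * N)) ^ 2)
    (hβ0 : β 0 < 1) (hβn : ∀ n : ℤ, n ≠ 0 → 1 < β n)
    (hlam : 0 ≤ lam) (hσ : 0 < σ + lam + β 0)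
    (φ : ℤ → ℝ) (hne : φ ≠ 0)
    (hsum : Summable (fun n : ℤ => (β n) ^ 2 * (φ n) ^ 2))
    (hsum3 : Summable (fun n : ℤ => β n * (σ + lam + β n) * (β n - 1) * (φ n) ^ 2))
    (hzero : ∑' n : ℤ, β n * (σ + lam + β n) * (β n - 1) * (φ n) ^ 2 = 0) :
    ∑' n : ℤ, (-1 : ℝ) ^ n * (β n * (β n - 1) * (φ n) ^ 2) < 0 :=
  stmt_4_general k lam σ N j hk β hβ hβ0 hβn hσ φ hne hsum3 hzero
end

section
/- Under the same hypotheses, the signed sum ∑ₙ∈ℤ (−1)ⁿ (βₙ - 1) φₙ² is strictly negative. -/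
/-!
Write `w n = βₙ (σ + λ + βₙ)` and `aₙ = (βₙ - 1) φₙ²`. Since `β₀ < 1 < βₙ` for `n ≠ 0` and
`σ + λ + β₀ > 0`, the weight `w` is positive with its strict minimum at `n = 0`, while `aₙ ≥ 0`
for `n ≠ 0`. Hence `(-1)ⁿ aₙ ≤ (wₙ / w₀) aₙ` termwise, with equality at `n = 0` and strict
inequality wherever `n ≠ 0` and `aₙ ≠ 0`; summing, `∑ (-1)ⁿ aₙ < ∑ wₙ aₙ / w₀ = 0`.
The vanishing of `∑ wₙ aₙ` also rules out `a` being supported at `0` alone, since `w₀ a₀ < 0`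
would then be the whole sum.
-/

theorem exists_ne_and_ne_zero_of_tsum_eq_zero {ι : Type*} {g : ι → ℝ} (i₀ : ι)
    (hg0 : ∑' i, g i = 0) (hg : g ≠ 0) : ∃ i ≠ i₀, g i ≠ 0 := by
  by_contra! h
  refine hg (funext fun i => ?_)
  by_cases hi : i = i₀
  · rw [hi, Pi.zero_apply, ← hg0, tsum_eq_single i₀ h]
  · exact h i hi

theorem tsum_neg_of_norm_le_of_tsum_eq_zero {ι : Type*} {f g : ι → ℝ} (i₀ : ι)
    (hg : Summable g) (hg0 : ∑' i, g i = 0) (hf₀ : f i₀ ≤ g i₀)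
    (hfg : ∀ i ≠ i₀, ‖f i‖ ≤ g i) {m : ι} (hlt : ‖f m‖ < g m) :
    ∑' i, f i < 0 := by
  have hle : ∀ i, f i ≤ g i := fun i => by
    by_cases hi : i = i₀
    · exact hi ▸ hf₀
    · exact (le_abs_self _).trans (hfg i hi)
  have hf : Summable f := hg.of_norm_bounded_eventually <|
    (Set.finite_singleton i₀).subset fun i hi => by_contra fun hne => hi (hfg i hne)
  calc ∑' i, f i < ∑' i, g i :=
        hf.tsum_lt_tsum hle ((le_abs_self _).trans_lt hlt) hg
    _ = 0 := hg0

theorem le_mul_div_of_le {a c w : ℝ} (hc : 0 < c) (hcw : c ≤ w) (ha : 0 ≤ a) :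
    a ≤ w * a / c := by
  rw [le_div_iff₀ hc, mul_comm a]
  exact mul_le_mul_of_nonneg_right hcw ha

theorem lt_mul_div_of_lt {a c w : ℝ} (hc : 0 < c) (hcw : c < w) (ha : 0 < a) :
    a < w * a / c := by
  rw [lt_div_iff₀ hc, mul_comm a]
  exact mul_lt_mul_of_pos_right hcw ha

theorem tsum_neg_one_zpow_mul_neg_of_weighted_tsum_eq_zero {w a : ℤ → ℝ} (hw₀ : 0 < w 0)
    (hw : ∀ n ≠ 0, w 0 < w n) (ha : ∀ n ≠ 0, 0 ≤ a n) (ha_ne : a ≠ 0)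
    (hsum : Summable fun n => w n * a n) (hzero : ∑' n, w n * a n = 0) :
    ∑' n : ℤ, (-1 : ℝ) ^ n * a n < 0 := by
  have hw_pos : ∀ n, 0 < w n := fun n => by
    rcases eq_or_ne n 0 with rfl | hn
    · exact hw₀
    · exact hw₀.trans (hw n hn)
  set g : ℤ → ℝ := fun n => w n * a n / w 0
  have hg0 : ∑' n, g n = 0 := by simp only [g, tsum_div_const, hzero, zero_div]
  have hg_ne : g ≠ 0 := fun h => ha_ne <| funext fun n => by
    simpa [g, (hw_pos n).ne', hw₀.ne'] using congrFun h n
  obtain ⟨m, hm, hgm⟩ := exists_ne_and_ne_zero_of_tsum_eq_zero 0 hg0 hg_ne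
  have ham : 0 < a m := (ha m hm).lt_of_ne' fun h => hgm (by simp [g, h])
  refine tsum_neg_of_norm_le_of_tsum_eq_zero 0 (hsum.div_const _) hg0 ?_ (fun n hn => ?_)
    (m := m) ?_
  · simp [hw₀.ne']
  · simpa [abs_of_nonneg (ha n hn)] using le_mul_div_of_le hw₀ (hw n hn).le (ha n hn)
  · simpa [abs_of_pos ham] using lt_mul_div_of_lt hw₀ (hw m hm) ham

theorem stmt_5_general (k lam σ : ℝ) (N j : ℤ) (hk : 0 < k)
    (β : ℤ → ℝ) (hβ : ∀ n : ℤ, β n = k ^ 2 + ((n : ℝ) + (j : ℝ) / (2 * N)) ^ 2)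
    (hβ0 : β 0 < 1) (hβn : ∀ n : ℤ, n ≠ 0 → 1 < β n)
    (hσ : 0 < σ + lam + β 0)
    (φ : ℤ → ℝ) (hne : φ ≠ 0)
    (hsum3 : Summable (fun n : ℤ => β n * (σ + lam + β n) * (β n - 1) * (φ n) ^ 2))
    (hzero : ∑' n : ℤ, β n * (σ + lam + β n) * (β n - 1) * (φ n) ^ 2 = 0) :
    ∑' n : ℤ, (-1 : ℝ) ^ n * ((β n - 1) * (φ n) ^ 2) < 0 := by
  have hβ0_pos : 0 < β 0 := by rw [hβ 0]; positivity
  have hβ_ne_one : ∀ n, β n - 1 ≠ 0 := fun n => by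
    rcases eq_or_ne n 0 with rfl | hn
    · linarith
    · linarith [hβn n hn]
  refine tsum_neg_one_zpow_mul_neg_of_weighted_tsum_eq_zero (w := fun n => β n * (σ + lam + β n))
    (mul_pos hβ0_pos hσ) (fun n hn => ?_) (fun n hn => ?_) (fun h => hne (funext fun n => ?_))
    (by simpa only [mul_assoc] using hsum3) (by simpa only [mul_assoc] using hzero)
  · have hβ0n := hβ0.trans (hβn n hn)
    exact mul_lt_mul hβ0n (by linarith) hσ (by linarith)
  · exact mul_nonneg (sub_nonneg.2 (hβn n hn).le) (sq_nonneg _)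
  · simpa [hβ_ne_one n] using congrFun h n

theorem stmt_5 (k lam σ : ℝ) (N j : ℤ) (hk : 0 < k) (hN : 2 ≤ N)
    (hj1 : 1 ≤ j) (hj2 : j ≤ N - 1)
    (β : ℤ → ℝ) (hβ : ∀ n : ℤ, β n = k ^ 2 + ((n : ℝ) + (j : ℝ) / (2 * N)) ^ 2)
    (hβ0 : β 0 < 1) (hβn : ∀ n : ℤ, n ≠ 0 → 1 < β n)
    (hlam : 0 ≤ lam) (hσ : 0 < σ + lam + β 0)
    (φ : ℤ → ℝ) (hne : φ ≠ 0)
    (hsum : Summable (fun n : ℤ => (β n) ^ 2 * (φ n) ^ 2))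
    (hsum3 : Summable (fun n : ℤ => β n * (σ + lam + β n) * (β n - 1) * (φ n) ^ 2))
    (hzero : ∑' n : ℤ, β n * (σ + lam + β n) * (β n - 1) * (φ n) ^ 2 = 0) :
    ∑' n : ℤ, (-1 : ℝ) ^ n * ((β n - 1) * (φ n) ^ 2) < 0 :=
  stmt_5_general k lam σ N j hk β hβ hβ0 hβn hσ φ hne hsum3 hzero
end

section
/- Let (φₙ) solve the recurrence 2(1+λ)βₙ(σ(R)+λ+βₙ)φₙ = R k ((βₙ₊₁-1)φₙ₊₁ − (βₙ₋₁-1)φₙ₋₁) for all n ∈ ℤ, where σ(R) and φₙ(R) are differentiable in R. Then the derivative σ'(R) satisfies σ'(R) · ∑ₙ (−1)ⁿ βₙ(βₙ−1)φₙ² = (1/R) ∑ₙ (−1)ⁿ βₙ(σ+λ+βₙ)(βₙ−1)φₙ², assuming all the series converge absolutely and differentiation can be interchanged with summation. -/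
/-!
With `uₙ = (βₙ - 1) φₙ(R)` and `vₙ = (βₙ - 1) φₙ'(R)` the recurrence expresses the centred difference
`uₙ₊₁ - uₙ₋₁` through `φₙ`, and its derivative in `R` expresses `vₙ₊₁ - vₙ₋₁` through `σ'`, `φₙ`, `φₙ'`.
Eliminating both, the `n`-th term of `σ' ∑ₙ (…) - (1/R) ∑ₙ (…)` becomes a multiple of
`Wₙ - Wₙ₋₁` for the alternating discrete Wronskian `Wₙ = (-1)ⁿ (uₙ vₙ₊₁ - vₙ uₙ₊₁)`. Since `βₙ → ∞`,
the summability hypothesis makes `u` and `v` square summable, so `W` is summable and the telescoping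
series sums to zero.
-/

open Filter

lemma tendsto_const_add_sq_cofinite (c t : ℝ) :
    Tendsto (fun n : ℤ => c + ((n : ℝ) + t) ^ 2) cofinite atTop := by
  have h : Tendsto (fun n : ℤ => |(n : ℝ) + t|) cofinite atTop :=
    tendsto_norm_cocompact_atTop.comp
      (Tendsto.comp (Homeomorph.addRight t).map_cocompact.le Int.tendsto_coe_cofinite)
  refine tendsto_atTop_add_const_left _ c ?_
  simpa only [Function.comp_def, sq_abs] using (tendsto_pow_atTop two_ne_zero).comp h

lemma Summable.neg_one_zpow_mul {f : ℤ → ℝ} (hf : Summable f) :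
    Summable fun n => (-1 : ℝ) ^ n * f n :=
  .of_norm_bounded hf.abs fun n => by rw [Real.norm_eq_abs, abs_mul, abs_neg_one_zpow, one_mul]

lemma Summable.hasSum_sub_comp_sub_one {G : Type*} [AddCommGroup G] [TopologicalSpace G]
    [IsTopologicalAddGroup G] {f : ℤ → G} (hf : Summable f) :
    HasSum (fun n => f n - f (n - 1)) 0 := by
  have hshift := (Equiv.subRight (1 : ℤ)).hasSum_iff.mpr hf.hasSum
  simpa using hf.hasSum.sub hshift

lemma summable_mul_comp_add {u v : ℤ → ℝ} (hu : Summable fun n => u n ^ 2)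
    (hv : Summable fun n => v n ^ 2) (p : ℤ) : Summable fun n => u n * v (n + p) := by
  have hvp : Summable fun n => v (n + p) ^ 2 := (Equiv.addRight p).summable_iff.mpr hv
  refine .of_norm_bounded ((hu.add hvp).div_const 2) fun n => ?_
  rw [Real.norm_eq_abs, abs_mul, le_div_iff₀ two_pos, ← sq_abs (u n), ← sq_abs (v (n + p))]
  linarith [two_mul_le_add_sq |u n| |v (n + p)|]

lemma summable_sq_sub_one_mul {β w c : ℤ → ℝ} (hβ : ∀ᶠ n in cofinite, 1 ≤ β n)
    (hc : Summable fun n => β n ^ 2 * c n ^ 2) (hw : ∀ n, |w n| ≤ c n) :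
    Summable fun n => ((β n - 1) * w n) ^ 2 := by
  refine .of_norm_bounded_eventually hc ?_
  filter_upwards [hβ] with n hn
  rw [Real.norm_eq_abs, abs_of_nonneg (sq_nonneg _), mul_pow]
  have hwc := abs_le.mp (hw n)
  exact mul_le_mul (pow_le_pow_left₀ (by linarith) (by linarith) 2) (sq_le_sq' hwc.1 hwc.2)
    (sq_nonneg _) (sq_nonneg _)

section AltWronskian

variable (u v : ℤ → ℝ)

noncomputable def altWronskian (n : ℤ) : ℝ := (-1 : ℝ) ^ n * (u n * v (n + 1) - v n * u (n + 1))

lemma altWronskian_sub_altWronskian_sub_one (n : ℤ) :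
    altWronskian u v n - altWronskian u v (n - 1)
      = (-1 : ℝ) ^ n * (u n * (v (n + 1) - v (n - 1)) - v n * (u (n + 1) - u (n - 1))) := by
  rw [altWronskian, altWronskian, sub_add_cancel, zpow_sub_one₀ (by norm_num : (-1 : ℝ) ≠ 0)]
  ring

variable {u v}

lemma summable_altWronskian (hu : Summable fun n => u n ^ 2) (hv : Summable fun n => v n ^ 2) :
    Summable (altWronskian u v) :=
  ((summable_mul_comp_add hu hv 1).sub (summable_mul_comp_add hv hu 1)).neg_one_zpow_mul

lemma hasSum_neg_one_zpow_mul_cross_diff (hu : Summable fun n => u n ^ 2)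
    (hv : Summable fun n => v n ^ 2) :
    HasSum (fun n => (-1 : ℝ) ^ n *
      (u n * (v (n + 1) - v (n - 1)) - v n * (u (n + 1) - u (n - 1)))) 0 := by
  simpa only [altWronskian_sub_altWronskian_sub_one] using
    (summable_altWronskian hu hv).hasSum_sub_comp_sub_one

end AltWronskian

lemma deriv_recurrence {k lam R : ℝ} {β : ℤ → ℝ} {σ : ℝ → ℝ} {φ : ℤ → ℝ → ℝ} (hR : 0 < R)
    (hσ : DifferentiableAt ℝ σ R) (hφ : ∀ n, DifferentiableAt ℝ (φ n) R)
    (hrec : ∀ R' : ℝ, 0 < R' → ∀ n : ℤ,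
      2 * (1 + lam) * β n * (σ R' + lam + β n) * φ n R'
        = R' * k * ((β (n + 1) - 1) * φ (n + 1) R' - (β (n - 1) - 1) * φ (n - 1) R'))
    (n : ℤ) :
    2 * (1 + lam) * β n * (deriv σ R * φ n R + (σ R + lam + β n) * deriv (φ n) R)
      = k * ((β (n + 1) - 1) * φ (n + 1) R - (β (n - 1) - 1) * φ (n - 1) R)
        + R * k * ((β (n + 1) - 1) * deriv (φ (n + 1)) R
          - (β (n - 1) - 1) * deriv (φ (n - 1)) R) := by
  have hlhs := (((hσ.hasDerivAt.add_const lam).add_const (β n)).const_mul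
    (2 * (1 + lam) * β n)).mul (hφ n).hasDerivAt
  have hrhs := ((hasDerivAt_id R).mul_const k).mul
    (((hφ (n + 1)).hasDerivAt.const_mul (β (n + 1) - 1)).sub
      ((hφ (n - 1)).hasDerivAt.const_mul (β (n - 1) - 1)))
  have heq : ∀ᶠ x in nhds R, x * k * ((β (n + 1) - 1) * φ (n + 1) x - (β (n - 1) - 1) * φ (n - 1) x)
      = 2 * (1 + lam) * β n * (σ x + lam + β n) * φ n x :=
    eventually_of_mem (Ioi_mem_nhds hR) fun x hx => (hrec x hx n).symm
  have hderiv := (hlhs.congr_of_eventuallyEq heq).unique hrhs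
  simp only [id, Pi.sub_apply] at hderiv
  linear_combination hderiv

lemma summable_mul_sub_one_mul_sq {β a : ℤ → ℝ} (hβ : ∀ᶠ n in cofinite, 2 ≤ β n)
    (ha : Summable fun n => ((β n - 1) * a n) ^ 2) :
    Summable fun n => β n * (β n - 1) * a n ^ 2 := by
  refine .of_norm_bounded_eventually (ha.mul_left 2) ?_
  filter_upwards [hβ] with n hn
  have hnonneg : 0 ≤ β n * (β n - 1) * a n ^ 2 :=
    mul_nonneg (mul_nonneg (by linarith) (by linarith)) (sq_nonneg _)
  rw [Real.norm_eq_abs, abs_of_nonneg hnonneg]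
  nlinarith [sq_nonneg (a n)]

lemma one_div_mul_eq_sub_of_recurrence {k lam R s s' : ℝ} {β a b u v : ℤ → ℝ} (n : ℤ)
    (hlam : 1 + lam ≠ 0) (hR : R ≠ 0) (hu : u n = (β n - 1) * a n) (hv : v n = (β n - 1) * b n)
    (hrec : 2 * (1 + lam) * β n * (s + lam + β n) * a n = R * k * (u (n + 1) - u (n - 1)))
    (hderiv : 2 * (1 + lam) * β n * (s' * a n + (s + lam + β n) * b n)
      = k * (u (n + 1) - u (n - 1)) + R * k * (v (n + 1) - v (n - 1))) :
    1 / R * ((-1 : ℝ) ^ n * (β n * (s + lam + β n) * (β n - 1) * a n ^ 2))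
      = s' * ((-1 : ℝ) ^ n * (β n * (β n - 1) * a n ^ 2))
        - R * k / (2 * (1 + lam)) * ((-1 : ℝ) ^ n *
          (u n * (v (n + 1) - v (n - 1)) - v n * (u (n + 1) - u (n - 1)))) := by
  rw [hu, hv]
  linear_combination (norm := skip)
    (-((-1 : ℝ) ^ n * (β n - 1) * a n) / (2 * (1 + lam))) * hderiv
      + ((-1 : ℝ) ^ n * (β n - 1) * b n / (2 * (1 + lam))
        + (-1 : ℝ) ^ n * (β n - 1) * a n / (2 * (1 + lam) * R)) * hrec
  field_simp
  ring

theorem stmt_7_general (k lam R : ℝ) (N j : ℤ)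
    (hlam : 0 ≤ lam) (hR : 0 < R)
    (β : ℤ → ℝ) (hβ : ∀ n : ℤ, β n = k ^ 2 + ((n : ℝ) + (j : ℝ) / (2 * N)) ^ 2)
    (σ : ℝ → ℝ) (φ : ℤ → ℝ → ℝ)
    (hσdiff : DifferentiableAt ℝ σ R)
    (hφdiff : ∀ n : ℤ, DifferentiableAt ℝ (φ n) R)
    (hrec : ∀ R' : ℝ, 0 < R' → ∀ n : ℤ,
      2 * (1 + lam) * β n * (σ R' + lam + β n) * φ n R'
        = R' * k * ((β (n + 1) - 1) * φ (n + 1) R' - (β (n - 1) - 1) * φ (n - 1) R'))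
    (hS2 : Summable (fun n : ℤ => (β n) ^ 2 * (|φ n R| + |deriv (φ n) R|) ^ 2)) :
    deriv σ R * ∑' n : ℤ, (-1 : ℝ) ^ n * (β n * (β n - 1) * (φ n R) ^ 2)
      = (1 / R) * ∑' n : ℤ,
          (-1 : ℝ) ^ n * (β n * (σ R + lam + β n) * (β n - 1) * (φ n R) ^ 2) := by
  set u : ℤ → ℝ := fun n => (β n - 1) * φ n R
  set v : ℤ → ℝ := fun n => (β n - 1) * deriv (φ n) R
  have hβ2 : ∀ᶠ n in cofinite, 2 ≤ β n := by
    simpa only [hβ] using (tendsto_const_add_sq_cofinite _ _).eventually_ge_atTop 2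
  have hβ1 : ∀ᶠ n in cofinite, 1 ≤ β n := hβ2.mono fun n hn => by linarith
  have hu : Summable fun n => u n ^ 2 :=
    summable_sq_sub_one_mul hβ1 hS2 fun n => le_add_of_nonneg_right (abs_nonneg _)
  have hv : Summable fun n => v n ^ 2 :=
    summable_sq_sub_one_mul hβ1 hS2 fun n => le_add_of_nonneg_left (abs_nonneg _)
  have hA := (summable_mul_sub_one_mul_sq hβ2 hu).neg_one_zpow_mul
  have hcross := hasSum_neg_one_zpow_mul_cross_diff hu hv
  have hlam' : 1 + lam ≠ 0 := by linarith
  have hterm (n : ℤ) := one_div_mul_eq_sub_of_recurrence (k := k) (s' := deriv σ R)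
    (a := fun m => φ m R) (b := fun m => deriv (φ m) R) (u := u) (v := v) n hlam' hR.ne' rfl rfl
    (hrec R hR n) (deriv_recurrence hR hσdiff hφdiff hrec n)
  calc deriv σ R * ∑' n : ℤ, (-1 : ℝ) ^ n * (β n * (β n - 1) * (φ n R) ^ 2)
      = ∑' n : ℤ, (deriv σ R * ((-1 : ℝ) ^ n * (β n * (β n - 1) * φ n R ^ 2))
          - R * k / (2 * (1 + lam)) * ((-1 : ℝ) ^ n *
            (u n * (v (n + 1) - v (n - 1)) - v n * (u (n + 1) - u (n - 1))))) := by
        rw [(hA.mul_left _).tsum_sub (hcross.summable.mul_left _), tsum_mul_left, tsum_mul_left,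
          hcross.tsum_eq, mul_zero, sub_zero]
    _ = _ := by rw [← tsum_mul_left]; exact (tsum_congr hterm).symm

theorem stmt_7 (k lam R : ℝ) (N j : ℤ) (hk : 0 < k) (hN : 2 ≤ N)
    (hj1 : 1 ≤ j) (hj2 : j ≤ N - 1) (hlam : 0 ≤ lam) (hR : 0 < R)
    (β : ℤ → ℝ) (hβ : ∀ n : ℤ, β n = k ^ 2 + ((n : ℝ) + (j : ℝ) / (2 * N)) ^ 2)
    (σ : ℝ → ℝ) (φ : ℤ → ℝ → ℝ)
    (hσdiff : DifferentiableAt ℝ σ R)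
    (hφdiff : ∀ n : ℤ, DifferentiableAt ℝ (φ n) R)
    (hrec : ∀ R' : ℝ, 0 < R' → ∀ n : ℤ,
      2 * (1 + lam) * β n * (σ R' + lam + β n) * φ n R'
        = R' * k * ((β (n + 1) - 1) * φ (n + 1) R' - (β (n - 1) - 1) * φ (n - 1) R'))
    (hS1 : Summable (fun n : ℤ =>
      (β n) ^ 2 * (σ R + lam + β n) * ((φ n R) ^ 2 + (deriv (φ n) R) ^ 2)))
    (hS2 : Summable (fun n : ℤ => (β n) ^ 2 * (|φ n R| + |deriv (φ n) R|) ^ 2)) :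
    deriv σ R * ∑' n : ℤ, (-1 : ℝ) ^ n * (β n * (β n - 1) * (φ n R) ^ 2)
      = (1 / R) * ∑' n : ℤ,
          (-1 : ℝ) ^ n * (β n * (σ R + lam + β n) * (β n - 1) * (φ n R) ^ 2) :=
  stmt_7_general k lam R N j hlam hR β hβ σ φ hσdiff hφdiff hrec hS2
end

section
/- Suppose β₀ < 1, βₙ > 1 for n ≠ 0, σ + λ + β₀ > 0, (φₙ) not identically zero with convergent weighted sums, and ∑ₙ βₙ(σ+λ+βₙ)(βₙ−1)φₙ² = 0. Then ∑ₙ (−1)ⁿ βₙ(σ+λ+βₙ)(βₙ−1)φₙ² < 0. -/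
/-!
Write `f n = βₙ(σ+λ+βₙ)(βₙ−1)φₙ²`, so that `∑ f = 0` and `f n ≥ (βₙ − 1)²φₙ² ≥ 0` for `n ≠ 0`.
Flipping the signs of the odd terms can only decrease the sum, and strictly so as soon as
`φ` is nonzero at some odd index. If `φ` vanished at every odd index, the recurrence at odd `n`
would make `ψₙ = (βₙ − 1)φₙ` constant along the even integers; since `ψₙ² ≤ f n` for `n ≠ 0` and `f`
is summable, that constant is `0`, and as `βₙ ≠ 1` this forces `φ = 0`.
-/

open Filter Topology

lemma sq_sub_one_lt_mul_mul {a b b₀ : ℝ} (hb₀ : b₀ < 1) (hb : 1 < b) (ha : 0 < a + b₀) :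
    (b - 1) ^ 2 < b * (a + b) * (b - 1) := by
  nlinarith [mul_pos (sub_pos.2 hb) (sub_pos.2 hb)]

theorem tsum_neg_one_zpow_mul_lt {f : ℤ → ℝ} (hf : Summable f) (hodd : ∀ n, Odd n → 0 ≤ f n)
    {n₀ : ℤ} (hn₀ : Odd n₀) (hfn₀ : 0 < f n₀) :
    ∑' n, (-1 : ℝ) ^ n * f n < ∑' n, f n := by
  have hle : ∀ n, (-1 : ℝ) ^ n * f n ≤ f n := by
    intro n
    rcases Int.even_or_odd n with he | ho
    · rw [he.neg_one_zpow, one_mul]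
    · rw [ho.neg_one_zpow]
      linarith [hodd n ho]
  have hlt : (-1 : ℝ) ^ n₀ * f n₀ < f n₀ := by
    rw [hn₀.neg_one_zpow]
    linarith
  have hsign : Summable fun n : ℤ => (-1 : ℝ) ^ n * f n :=
    hf.norm.of_norm_bounded fun n => by simp
  exact hsign.tsum_lt_tsum hle hlt hf

theorem Function.Periodic.eq_zero_of_tendsto_cofinite {d : ℤ → ℝ} (hd : Function.Periodic d 1)
    (h : Tendsto d cofinite (𝓝 0)) : d = 0 := by
  have hconst : d = fun _ => d 0 := funext fun s => by simpa using hd.int_mul_eq s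
  have htop : Tendsto d atTop (𝓝 0) := h.mono_left (Int.cofinite_eq ▸ le_sup_right)
  rw [hconst] at htop ⊢
  exact funext fun _ => tendsto_nhds_unique tendsto_const_nhds htop

theorem exists_odd_ne_zero_of_recurrence {φ ψ a : ℤ → ℝ} {K : ℝ} (hK : K ≠ 0) (hφ : φ ≠ 0)
    (hψφ : ∀ n, ψ n = 0 → φ n = 0) (hψ : Tendsto (fun n => ψ n ^ 2) cofinite (𝓝 0))
    (hrec : ∀ n, a n * φ n = K * (ψ (n + 1) - ψ (n - 1))) :
    ∃ n, Odd n ∧ φ n ≠ 0 := by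
  by_contra! hodd
  have hper : Function.Periodic (fun t : ℤ => ψ (2 * t)) 1 := by
    intro t
    have h := hrec (2 * t + 1)
    rw [hodd _ (odd_two_mul_add_one t), mul_zero, eq_comm, mul_eq_zero, sub_eq_zero,
      add_sub_cancel_right] at h
    convert h.resolve_left hK using 2
    ring
  have hzero : (fun t : ℤ => ψ (2 * t) ^ 2) = 0 :=
    (hper.comp (· ^ 2)).eq_zero_of_tendsto_cofinite
      (hψ.comp (Function.Injective.tendsto_cofinite fun _ _ h => by simpa using h))
  refine hφ (funext fun n => ?_)
  rcases Int.even_or_odd' n with ⟨t, rfl | rfl⟩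
  · exact hψφ _ (pow_eq_zero_iff two_ne_zero |>.1 (congrFun hzero t))
  · exact hodd _ (odd_two_mul_add_one t)

theorem stmt_8_general (k lam σ : ℝ) (hk : 0 < k)
    (β : ℤ → ℝ)
    (hβ0 : β 0 < 1) (hβn : ∀ n : ℤ, n ≠ 0 → 1 < β n)
    (hσ : 0 < σ + lam + β 0)
    (φ : ℤ → ℝ) (hne : φ ≠ 0)
    (hsum3 : Summable (fun n : ℤ => β n * (σ + lam + β n) * (β n - 1) * (φ n) ^ 2))
    (hzero : ∑' n : ℤ, β n * (σ + lam + β n) * (β n - 1) * (φ n) ^ 2 = 0) (R : ℝ) (hR : 0 < R)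
    (hrec : ∀ n : ℤ, 2 * (1 + lam) * β n * (σ + lam + β n) * φ n
      = R * k * ((β (n + 1) - 1) * φ (n + 1) - (β (n - 1) - 1) * φ (n - 1))) :
    ∑' n : ℤ, (-1 : ℝ) ^ n * (β n * (σ + lam + β n) * (β n - 1) * (φ n) ^ 2) < 0 := by
  have hweight : ∀ n, n ≠ 0 → (β n - 1) ^ 2 < β n * (σ + lam + β n) * (β n - 1) :=
    fun n hn => sq_sub_one_lt_mul_mul hβ0 (hβn n hn) hσ
  have hβ1 : ∀ n, β n ≠ 1 := fun n => by
    rcases eq_or_ne n 0 with rfl | hn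
    exacts [hβ0.ne, (hβn n hn).ne']
  have hdecay : Tendsto (fun n => ((β n - 1) * φ n) ^ 2) cofinite (𝓝 0) := by
    refine tendsto_of_tendsto_of_tendsto_of_le_of_le' tendsto_const_nhds
      hsum3.tendsto_cofinite_zero (.of_forall fun n => sq_nonneg _) ?_
    filter_upwards [eventually_cofinite_ne 0] with n hn
    rw [mul_pow]
    exact mul_le_mul_of_nonneg_right (hweight n hn).le (sq_nonneg _)
  obtain ⟨n₀, hn₀, hφn₀⟩ := exists_odd_ne_zero_of_recurrence (mul_pos hR hk).ne' hne
    (fun n h => (mul_eq_zero.1 h).resolve_left (sub_ne_zero.2 (hβ1 n))) hdecay hrec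
  have hne0 : ∀ n : ℤ, Odd n → n ≠ 0 := by
    rintro n hn rfl
    simp at hn
  have hnonneg : ∀ n, n ≠ 0 → 0 ≤ β n * (σ + lam + β n) * (β n - 1) * φ n ^ 2 :=
    fun n hn => mul_nonneg ((sq_nonneg _).trans (hweight n hn).le) (sq_nonneg _)
  have hpos : 0 < β n₀ * (σ + lam + β n₀) * (β n₀ - 1) * φ n₀ ^ 2 :=
    mul_pos ((sq_nonneg _).trans_lt (hweight n₀ (hne0 n₀ hn₀))) (sq_pos_of_ne_zero hφn₀)
  simpa only [hzero] using
    tsum_neg_one_zpow_mul_lt hsum3 (fun n hn => hnonneg n (hne0 n hn)) hn₀ hpos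

theorem stmt_8 (k lam σ : ℝ) (N j : ℤ) (hk : 0 < k) (hN : 2 ≤ N)
    (hj1 : 1 ≤ j) (hj2 : j ≤ N - 1)
    (β : ℤ → ℝ) (hβ : ∀ n : ℤ, β n = k ^ 2 + ((n : ℝ) + (j : ℝ) / (2 * N)) ^ 2)
    (hβ0 : β 0 < 1) (hβn : ∀ n : ℤ, n ≠ 0 → 1 < β n)
    (hlam : 0 ≤ lam) (hσ : 0 < σ + lam + β 0)
    (φ : ℤ → ℝ) (hne : φ ≠ 0)
    (hsum : Summable (fun n : ℤ => (β n) ^ 2 * (φ n) ^ 2))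
    (hsum3 : Summable (fun n : ℤ => β n * (σ + lam + β n) * (β n - 1) * (φ n) ^ 2))
    (hzero : ∑' n : ℤ, β n * (σ + lam + β n) * (β n - 1) * (φ n) ^ 2 = 0) (R : ℝ) (hR : 0 < R)
    (hrec : ∀ n : ℤ, 2 * (1 + lam) * β n * (σ + lam + β n) * φ n
      = R * k * ((β (n + 1) - 1) * φ (n + 1) - (β (n - 1) - 1) * φ (n - 1))) :
    ∑' n : ℤ, (-1 : ℝ) ^ n * (β n * (σ + lam + β n) * (β n - 1) * (φ n) ^ 2) < 0 :=
  stmt_8_general k lam σ hk β hβ0 hβn hσ φ hne hsum3 hzero R hR hrec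
end

section
/- Let ψ* = e^{ikx} ∑ₙ iⁿ φₙ* sin((n + j/(2N)) y). Then (Δ+1)[cos(y) ∂ₓψ*] = (k/2) e^{ikx} ∑ₙ iⁿ (βₙ−1)(φₙ₊₁* − φₙ₋₁*) sin((n + j/(2N)) y), with βₙ = k² + (n + j/(2N))². -/
noncomputable def cdx (f : ℝ × ℝ → ℂ) (p : ℝ × ℝ) : ℂ := fderiv ℝ f p (1, 0)
noncomputable def cdy (f : ℝ × ℝ → ℂ) (p : ℝ × ℝ) : ℂ := fderiv ℝ f p (0, 1)
noncomputable def clap (f : ℝ × ℝ → ℂ) : ℝ × ℝ → ℂ :=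
  fun p => cdx (cdx f) p + cdy (cdy f) p

/-!
Write `ψ* = e^{ikx} h(y)` with `h` the sine series `∑ cₙ sin(ωₙ y)`, `ωₙ = n + a`. On functions of
the form `e^{ikx} h(y)` the operator `Δ + 1` acts as `h ↦ h'' + (1 - k²) h`, hence as multiplication
by `1 - βₙ` on the mode `sin(ωₙ y)`; termwise differentiation is justified by the weighted bound
`∑ (1 + ωₙ²) ‖cₙ‖ < ∞`, which the decay of `φ*` provides. Multiplication by `cos y` first shifts
modes, `cos y sin(ωₙ y) = (sin(ωₙ₊₁ y) + sin(ωₙ₋₁ y)) / 2`, and the powers of `i` turn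
`i (iⁿ⁻¹ φₙ₋₁ + iⁿ⁺¹ φₙ₊₁)` into `iⁿ (φₙ₋₁ - φₙ₊₁)`.
-/

open Complex

noncomputable def modulate (k : ℝ) (h : ℝ → ℂ) (p : ℝ × ℝ) : ℂ :=
  exp (I * k * p.1) * h p.2

section modulate

variable {k : ℝ} {h : ℝ → ℂ} {h' : ℂ} {p : ℝ × ℝ}

theorem hasDerivAt_exp_I_mul (k x : ℝ) :
    HasDerivAt (fun x : ℝ => exp (I * k * x)) (I * k * exp (I * k * x)) x := by
  simpa [mul_comm] using ((ofRealCLM.hasDerivAt (x := x)).const_mul (I * k)).cexp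

theorem fderiv_modulate_apply (hh : HasDerivAt h h' p.2) (v : ℝ × ℝ) :
    fderiv ℝ (modulate k h) p v = exp (I * k * p.1) * (v.1 * (I * k) * h p.2 + v.2 * h') := by
  have hx := (hasDerivAt_exp_I_mul k p.1).hasFDerivAt.comp p hasFDerivAt_fst
  have hy := hh.hasFDerivAt.comp p hasFDerivAt_snd
  have hm : HasFDerivAt (modulate k h) _ p := hx.mul hy
  simp only [hm.fderiv, Function.comp_apply, add_apply, smul_apply, smul_eq_mul, real_smul,
    ContinuousLinearMap.comp_apply, ContinuousLinearMap.coe_fst', ContinuousLinearMap.coe_snd',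
    ContinuousLinearMap.toSpanSingleton_apply]
  ring

theorem cdx_modulate (hh : DifferentiableAt ℝ h p.2) :
    cdx (modulate k h) p = I * k * modulate k h p := by
  simp only [cdx, fderiv_modulate_apply hh.hasDerivAt, modulate, ofReal_one, ofReal_zero,
    one_mul, zero_mul, add_zero]
  ring

theorem cdy_modulate (hh : DifferentiableAt ℝ h p.2) :
    cdy (modulate k h) p = modulate k (deriv h) p := by
  simp [cdy, fderiv_modulate_apply hh.hasDerivAt, modulate]

theorem clap_modulate (hh : Differentiable ℝ h) (hh' : Differentiable ℝ (deriv h)) :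
    clap (modulate k h) p = modulate k (fun y => deriv (deriv h) y - k ^ 2 * h y) p := by
  have hx : cdx (modulate k h) = modulate k (fun y => I * k * h y) := by
    funext q
    rw [cdx_modulate (hh _), modulate, modulate]
    ring
  have hy : cdy (modulate k h) = modulate k (deriv h) := funext fun q => cdy_modulate (hh _)
  rw [clap, hx, hy, cdx_modulate ((hh _).const_mul _), cdy_modulate (hh' _)]
  simp only [modulate]
  linear_combination (k ^ 2 * exp (I * k * p.1) * h p.2) * I_sq

end modulate

noncomputable def sinSeries {ι : Type*} (ω : ι → ℝ) (c : ι → ℂ) (y : ℝ) : ℂ :=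
  ∑' n, c n * Real.sin (ω n * y)

noncomputable def cosSeries {ι : Type*} (ω : ι → ℝ) (c : ι → ℂ) (y : ℝ) : ℂ :=
  ∑' n, c n * Real.cos (ω n * y)

theorem norm_mul_ofReal_le {z : ℂ} {x : ℝ} (hx : |x| ≤ 1) : ‖z * x‖ ≤ ‖z‖ := by
  rw [norm_mul, norm_real, Real.norm_eq_abs]
  exact mul_le_of_le_one_right (norm_nonneg z) hx

section trigSeries

variable {ι : Type*} {ω : ι → ℝ} {c : ι → ℂ}

theorem summable_sinSeries (hc : Summable fun n => ‖c n‖) (y : ℝ) :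
    Summable fun n => c n * Real.sin (ω n * y) :=
  .of_norm_bounded hc fun _ => norm_mul_ofReal_le (Real.abs_sin_le_one _)

theorem summable_cosSeries (hc : Summable fun n => ‖c n‖) (y : ℝ) :
    Summable fun n => c n * Real.cos (ω n * y) :=
  .of_norm_bounded hc fun _ => norm_mul_ofReal_le (Real.abs_cos_le_one _)

theorem hasDerivAt_sinSeries (hc : Summable fun n => ‖c n‖)
    (hωc : Summable fun n => ‖(ω n : ℂ) * c n‖) (y : ℝ) :
    HasDerivAt (sinSeries ω c) (cosSeries ω (fun n => ω n * c n) y) y := by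
  refine hasDerivAt_tsum (g := fun n y => c n * Real.sin (ω n * y))
    (g' := fun n y => ω n * c n * Real.cos (ω n * y)) hωc (fun n y => ?_)
    (fun n y => norm_mul_ofReal_le (Real.abs_cos_le_one _)) (summable_sinSeries hc 0) y
  have hsin := ((hasDerivAt_id' y).const_mul (ω n)).sin
  refine (hsin.ofReal_comp.const_mul (c n)).congr_deriv ?_
  push_cast
  ring

theorem hasDerivAt_cosSeries (hc : Summable fun n => ‖c n‖)
    (hωc : Summable fun n => ‖(ω n : ℂ) * c n‖) (y : ℝ) :
    HasDerivAt (cosSeries ω c) (sinSeries ω (fun n => -(ω n * c n)) y) y := by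
  refine hasDerivAt_tsum (g := fun n y => c n * Real.cos (ω n * y))
    (g' := fun n y => -(ω n * c n) * Real.sin (ω n * y)) hωc (fun n y => ?_)
    (fun n y => by rw [neg_mul, norm_neg]; exact norm_mul_ofReal_le (Real.abs_sin_le_one _))
    (summable_cosSeries hc 0) y
  have hcos := ((hasDerivAt_id' y).const_mul (ω n)).cos
  refine (hcos.ofReal_comp.const_mul (c n)).congr_deriv ?_
  push_cast
  ring

theorem Summable.norm_mul_of_weighted (hw : Summable fun n => (1 + ω n ^ 2) * ‖c n‖)
    {r : ι → ℂ} (hr : ∀ n, ‖r n‖ ≤ 1 + ω n ^ 2) : Summable fun n => ‖r n * c n‖ :=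
  hw.of_nonneg_of_le (fun _ => norm_nonneg _) fun n => by
    rw [norm_mul]; exact mul_le_mul_of_nonneg_right (hr n) (norm_nonneg _)

theorem Summable.norm_of_weighted (hw : Summable fun n => (1 + ω n ^ 2) * ‖c n‖) :
    Summable fun n => ‖c n‖ := by
  simpa using hw.norm_mul_of_weighted (r := 1) fun n => by simp [sq_nonneg]

theorem Summable.norm_ofReal_mul_of_weighted (hw : Summable fun n => (1 + ω n ^ 2) * ‖c n‖) :
    Summable fun n => ‖(ω n : ℂ) * c n‖ :=
  hw.norm_mul_of_weighted fun n => by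
    rw [norm_real, Real.norm_eq_abs]; nlinarith [abs_nonneg (ω n), sq_abs (ω n)]

theorem clap_add_modulate_sinSeries (k : ℝ) (hw : Summable fun n => (1 + ω n ^ 2) * ‖c n‖)
    (p : ℝ × ℝ) :
    clap (modulate k (sinSeries ω c)) p + modulate k (sinSeries ω c) p =
      modulate k (sinSeries ω fun n => (1 - k ^ 2 - ω n ^ 2) * c n) p := by
  have h0 := hw.norm_of_weighted
  have h1 := hw.norm_ofReal_mul_of_weighted
  have h2 : Summable fun n => ‖(ω n : ℂ) * (ω n * c n)‖ := by
    simpa only [mul_assoc] using hw.norm_mul_of_weighted (r := fun n => (ω n : ℂ) * ω n)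
      fun n => by rw [norm_mul, norm_real, Real.norm_eq_abs]; nlinarith [abs_mul_abs_self (ω n)]
  have hd : deriv (sinSeries ω c) = cosSeries ω fun n => ω n * c n :=
    funext fun y => (hasDerivAt_sinSeries h0 h1 y).deriv
  have hdd : deriv (cosSeries ω fun n => ω n * c n) = sinSeries ω fun n => -(ω n * (ω n * c n)) :=
    funext fun y => (hasDerivAt_cosSeries h1 h2 y).deriv
  rw [clap_modulate (fun y => (hasDerivAt_sinSeries h0 h1 y).differentiableAt)
    (hd ▸ fun y => (hasDerivAt_cosSeries h1 h2 y).differentiableAt), hd, hdd]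
  simp only [modulate, sinSeries, ← mul_add]
  congr 1
  have hs := summable_sinSeries (ω := ω) h0 p.2
  have hs' : Summable fun n => -(ω n * (ω n * c n)) * (Real.sin (ω n * p.2) : ℂ) := by
    simpa only [neg_mul] using (summable_sinSeries h2 p.2).neg
  rw [← tsum_mul_left, ← hs'.tsum_sub (hs.mul_left _), ← (hs'.sub (hs.mul_left _)).tsum_add hs]
  exact tsum_congr fun n => by ring

end trigSeries

noncomputable def cosMulCoeff (c : ℤ → ℂ) (n : ℤ) : ℂ := (c (n - 1) + c (n + 1)) / 2

section cosMul

variable {ω : ℤ → ℝ} {c : ℤ → ℂ}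

theorem cos_mul_sinSeries (hω : ∀ n, ω (n + 1) = ω n + 1) (hc : Summable fun n => ‖c n‖)
    (y : ℝ) : (Real.cos y : ℂ) * sinSeries ω c y = sinSeries ω (cosMulCoeff c) y := by
  have hsin : ∀ n, Real.cos y * Real.sin (ω n * y) =
      (Real.sin (ω (n + 1) * y) + Real.sin (ω (n - 1) * y)) / 2 := fun n => by
    have hω' : ω (n - 1) = ω n - 1 := by linarith [sub_add_cancel n 1 ▸ hω (n - 1)]
    rw [hω, hω', add_mul, sub_mul, one_mul, Real.sin_add, Real.sin_sub]
    ring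
  have hup : Summable fun n => c n * Real.sin (ω (n + 1) * y) :=
    .of_norm_bounded hc fun _ => norm_mul_ofReal_le (Real.abs_sin_le_one _)
  have hdown : Summable fun n => c n * Real.sin (ω (n - 1) * y) :=
    .of_norm_bounded hc fun _ => norm_mul_ofReal_le (Real.abs_sin_le_one _)
  have hup' : ∑' n, c n * Real.sin (ω (n + 1) * y) = ∑' n, c (n - 1) * Real.sin (ω n * y) := by
    simpa using (Equiv.addRight (1 : ℤ)).tsum_eq fun n => c (n - 1) * Real.sin (ω n * y)
  have hdown' : ∑' n, c n * Real.sin (ω (n - 1) * y) = ∑' n, c (n + 1) * Real.sin (ω n * y) := by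
    simpa using (Equiv.subRight (1 : ℤ)).tsum_eq fun n => c (n + 1) * Real.sin (ω n * y)
  have hshift : Summable fun n => c (n - 1) * Real.sin (ω n * y) :=
    .of_norm_bounded (hc.comp_injective sub_left_injective) fun _ =>
      norm_mul_ofReal_le (Real.abs_sin_le_one _)
  have hshift' : Summable fun n => c (n + 1) * Real.sin (ω n * y) :=
    .of_norm_bounded (hc.comp_injective (add_left_injective 1)) fun _ =>
      norm_mul_ofReal_le (Real.abs_sin_le_one _)
  calc (Real.cos y : ℂ) * sinSeries ω c y
      = ∑' n, (c n * Real.sin (ω (n + 1) * y) + c n * Real.sin (ω (n - 1) * y)) / 2 := by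
        rw [sinSeries, ← tsum_mul_left]
        refine tsum_congr fun n => ?_
        have := congrArg (fun t : ℝ => (t : ℂ)) (hsin n)
        simp only [ofReal_mul, ofReal_div, ofReal_add, ofReal_ofNat] at this
        linear_combination c n * this
    _ = (∑' n, c (n - 1) * Real.sin (ω n * y) + ∑' n, c (n + 1) * Real.sin (ω n * y)) / 2 := by
        rw [tsum_div_const, hup.tsum_add hdown, hup', hdown']
    _ = sinSeries ω (cosMulCoeff c) y := by
        rw [← hshift.tsum_add hshift', ← tsum_div_const, sinSeries]
        exact tsum_congr fun n => by rw [cosMulCoeff]; ring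

theorem summable_weighted_cosMulCoeff (hω : ∀ n, ω (n + 1) = ω n + 1)
    (hw : Summable fun n => (1 + ω n ^ 2) * ‖c n‖) :
    Summable fun n => (1 + ω n ^ 2) * ‖cosMulCoeff c n‖ := by
  have hdown := hw.comp_injective (sub_left_injective (b := (1 : ℤ)))
  have hup := hw.comp_injective (add_left_injective (1 : ℤ))
  refine ((hdown.add hup).mul_left (3 / 2)).of_nonneg_of_le (fun _ => by positivity) fun n => ?_
  have hω' : ω (n - 1) = ω n - 1 := by linarith [sub_add_cancel n 1 ▸ hω (n - 1)]
  have hnorm : ‖cosMulCoeff c n‖ ≤ (‖c (n - 1)‖ + ‖c (n + 1)‖) / 2 := by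
    rw [cosMulCoeff, norm_div, RCLike.norm_ofNat]
    gcongr
    exact norm_add_le _ _
  have hle_down : 1 + ω n ^ 2 ≤ 3 * (1 + ω (n - 1) ^ 2) := by
    rw [hω']; nlinarith [sq_nonneg (2 * ω n - 1)]
  have hle_up : 1 + ω n ^ 2 ≤ 3 * (1 + ω (n + 1) ^ 2) := by
    rw [hω]; nlinarith [sq_nonneg (2 * ω n + 1)]
  calc (1 + ω n ^ 2) * ‖cosMulCoeff c n‖
      ≤ ((1 + ω n ^ 2) * ‖c (n - 1)‖ + (1 + ω n ^ 2) * ‖c (n + 1)‖) / 2 := by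
        nlinarith [mul_le_mul_of_nonneg_left hnorm (by positivity : 0 ≤ 1 + ω n ^ 2)]
    _ ≤ (3 * (1 + ω (n - 1) ^ 2) * ‖c (n - 1)‖ + 3 * (1 + ω (n + 1) ^ 2) * ‖c (n + 1)‖) / 2 := by
        gcongr
    _ = _ := by simp only [Function.comp_apply]; ring

end cosMul

theorem I_mul_cosMulCoeff_I_zpow_mul (φ : ℤ → ℝ) (n : ℤ) :
    I * cosMulCoeff (fun m => I ^ m * φ m) n = I ^ n * ((φ (n - 1) - φ (n + 1)) / 2) := by
  rw [cosMulCoeff, zpow_sub_one₀ I_ne_zero, zpow_add_one₀ I_ne_zero, inv_I]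
  linear_combination I ^ n * (φ (n + 1) - φ (n - 1)) / 2 * I_sq

theorem stmt_16_general (k a : ℝ)
    (β : ℤ → ℝ) (hβ : ∀ n : ℤ, β n = k ^ 2 + ((n : ℝ) + a) ^ 2)
    (φs : ℤ → ℝ)
    (hdec : ∀ m : ℕ, Summable (fun n : ℤ => (β n) ^ m * |φs n|))
    (ψs : ℝ × ℝ → ℂ)
    (hψs : ∀ p : ℝ × ℝ, ψs p = Complex.exp (Complex.I * k * p.1) *
      ∑' n : ℤ, Complex.I ^ n * (φs n : ℂ) * (Real.sin (((n : ℝ) + a) * p.2) : ℂ))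
    (g : ℝ × ℝ → ℂ) (hg : ∀ p : ℝ × ℝ, g p = (Real.cos p.2 : ℂ) * cdx ψs p) :
    ∀ p : ℝ × ℝ,
      clap g p + g p
        = ((k : ℂ) / 2) * Complex.exp (Complex.I * k * p.1) *
            ∑' n : ℤ, Complex.I ^ n * ((β n - 1 : ℝ) : ℂ) *
              ((φs (n + 1) - φs (n - 1) : ℝ) : ℂ) *
              (Real.sin (((n : ℝ) + a) * p.2) : ℂ) := by
  set ω : ℤ → ℝ := fun n => n + a
  have hω : ∀ n, ω (n + 1) = ω n + 1 := fun n => by simp only [ω]; push_cast; ring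
  set c : ℤ → ℂ := fun n => I ^ n * φs n
  have hc : Summable fun n => (1 + ω n ^ 2) * ‖c n‖ := by
    refine ((hdec 0).add (hdec 1)).of_nonneg_of_le (fun _ => by positivity) fun n => ?_
    rw [norm_mul, norm_zpow, norm_I, one_zpow, one_mul, norm_real, Real.norm_eq_abs, hβ]
    nlinarith [abs_nonneg (φs n), mul_nonneg (sq_nonneg k) (abs_nonneg (φs n))]
  have hψ : ψs = modulate k (sinSeries ω c) := funext hψs
  set cg : ℤ → ℂ := fun n => k * (I * cosMulCoeff c n)
  have hcg : Summable fun n => (1 + ω n ^ 2) * ‖cg n‖ := by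
    simpa [cg, norm_mul, mul_left_comm] using (summable_weighted_cosMulCoeff hω hc).mul_left |k|
  have hgm : g = modulate k (sinSeries ω cg) := funext fun p => by
    rw [hg, hψ, cdx_modulate (hasDerivAt_sinSeries hc.norm_of_weighted
      hc.norm_ofReal_mul_of_weighted p.2).differentiableAt]
    simp only [modulate, cg, sinSeries, mul_assoc, tsum_mul_left]
    rw [← sinSeries, ← sinSeries, ← cos_mul_sinSeries hω hc.norm_of_weighted]
    ring
  intro p
  rw [hgm, clap_add_modulate_sinSeries k hcg p]
  simp only [modulate, sinSeries]
  rw [mul_comm ((k : ℂ) / 2), mul_assoc (exp _), ← tsum_mul_left (a := (k : ℂ) / 2)]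
  congr 1
  refine tsum_congr fun n => ?_
  simp only [cg, c, I_mul_cosMulCoeff_I_zpow_mul, ω, hβ]
  push_cast
  ring

theorem stmt_16 (k a : ℝ) (hk : 0 < k) (ha1 : 0 < a) (ha2 : a < 1)
    (β : ℤ → ℝ) (hβ : ∀ n : ℤ, β n = k ^ 2 + ((n : ℝ) + a) ^ 2)
    (φs : ℤ → ℝ)
    (hdec : ∀ m : ℕ, Summable (fun n : ℤ => (β n) ^ m * |φs n|))
    (ψs : ℝ × ℝ → ℂ)
    (hψs : ∀ p : ℝ × ℝ, ψs p = Complex.exp (Complex.I * k * p.1) *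
      ∑' n : ℤ, Complex.I ^ n * (φs n : ℂ) * (Real.sin (((n : ℝ) + a) * p.2) : ℂ))
    (g : ℝ × ℝ → ℂ) (hg : ∀ p : ℝ × ℝ, g p = (Real.cos p.2 : ℂ) * cdx ψs p) :
    ∀ p : ℝ × ℝ,
      clap g p + g p
        = ((k : ℂ) / 2) * Complex.exp (Complex.I * k * p.1) *
            ∑' n : ℤ, Complex.I ^ n * ((β n - 1 : ℝ) : ℂ) *
              ((φs (n + 1) - φs (n - 1) : ℝ) : ℂ) *
              (Real.sin (((n : ℝ) + a) * p.2) : ℂ) :=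
  stmt_16_general k a β hβ φs hdec ψs hψs g hg
end
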